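/- Let n, n' ≥ 1 and suppose g = (x, u), g' = (x', u') ∈ ℝⁿ × ℝⁿ' satisfy x = -x' and 2|u - u'| ≥ π|x|². Then the squared Carnot–Carathéodory distance for the Grushin operator equals d(g,g')² = 2π|u - u'|, and it coincides with sup over λ ∈ ℝⁿ' with |λ| < π of [R²·ψ_a(i|λ|) + 2(u-u')·λ], where R² = |x|² + |x'|² = 2|x|², a = 2x·x'/R² = -1, and ψ_{-1}(i·t) = t·cot(t/2) for 0 < t < π (extended by ψ_{-1}(0) = 2). -/

import Mathlib

open Real
open scoped InnerProductSpace

private lemma psi_nonneg {s : ℝ} (hs : 0 ≤ s) (hs' : s < π) :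
    0 ≤ (if s = 0 then (2:ℝ) else s * (Real.cos (s / 2) / Real.sin (s / 2))) := by
  split_ifs with h
  · norm_num
  · have hs0 : 0 < s := lt_of_le_of_ne hs (Ne.symm h)
    have hsin : 0 < Real.sin (s / 2) :=
      Real.sin_pos_of_pos_of_lt_pi (by linarith) (by linarith [Real.pi_pos])
    have hcos : 0 ≤ Real.cos (s / 2) :=
      Real.cos_nonneg_of_neg_pi_div_two_le_of_le (by linarith [Real.pi_pos]) (by linarith)
    positivity

private lemma psi_le {s : ℝ} (hs : 0 ≤ s) (hs' : s < π) :
    (if s = 0 then (2:ℝ) else s * (Real.cos (s / 2) / Real.sin (s / 2)))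
      ≤ π * (π - s) / 2 := by
  split_ifs with h
  · subst h
    nlinarith [Real.pi_gt_three]
  · have hs0 : 0 < s := lt_of_le_of_ne hs (Ne.symm h)
    have hsin : 0 < Real.sin (s / 2) :=
      Real.sin_pos_of_pos_of_lt_pi (by linarith) (by linarith [Real.pi_pos])
    have hpi : 0 < π := Real.pi_pos
    -- Jordan: s/π ≤ sin (s/2)
    have h1 : s / π ≤ Real.sin (s / 2) := by
      have := Real.mul_le_sin (x := s / 2) (by linarith) (by linarith)
      calc s / π = 2 / π * (s / 2) := by field_simp
        _ ≤ Real.sin (s / 2) := this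
    -- cos (s/2) = sin ((π - s)/2) ≤ (π - s)/2
    have h2 : Real.cos (s / 2) ≤ (π - s) / 2 := by
      have hc : Real.cos (s / 2) = Real.sin ((π - s) / 2) := by
        rw [← Real.sin_pi_div_two_sub]; ring_nf
      rw [hc]
      exact Real.sin_le (by linarith)
    have hdiv : Real.cos (s / 2) / Real.sin (s / 2) ≤ ((π - s) / 2) / (s / π) :=
      div_le_div₀ (by linarith) h2 (by positivity) h1
    have key : s * (((π - s) / 2) / (s / π)) = π * (π - s) / 2 := by
      field_simp
    calc s * (Real.cos (s / 2) / Real.sin (s / 2))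
        ≤ s * (((π - s) / 2) / (s / π)) := by
          exact mul_le_mul_of_nonneg_left hdiv hs
      _ = π * (π - s) / 2 := key

/-- For `g = (x,u)`, `g' = (x',u')` with `x' = -x` and `2|u-u'| ≥ π|x|²`, the
squared Grushin Carnot–Carathéodory distance, given by the variational formula
`d(g,g')² = sup_{|λ|<π} (R² ψ_{-1}(i|λ|) + 2(u-u')·λ)` with `R² = |x|² + |x'|²`,
`ψ_{-1}(it) = t·cot(t/2)` (extended by `ψ_{-1}(0) = 2`), equals `2π|u-u'|`. -/
theorem grushin_distSq_eq_of_antipodal (n n' : ℕ) (hn : 1 ≤ n) (hn' : 1 ≤ n')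
    (x x' : EuclideanSpace ℝ (Fin n)) (u u' : EuclideanSpace ℝ (Fin n'))
    (hx : x' = -x) (hr : π * ‖x‖ ^ 2 ≤ 2 * ‖u - u'‖) :
    sSup {t : ℝ | ∃ l : EuclideanSpace ℝ (Fin n'), ‖l‖ < π ∧
        t = (‖x‖ ^ 2 + ‖x'‖ ^ 2) *
            (if ‖l‖ = 0 then 2 else ‖l‖ * (Real.cos (‖l‖ / 2) / Real.sin (‖l‖ / 2))) +
          2 * ⟪u - u', l⟫_ℝ} = 2 * π * ‖u - u'‖ := by
  have hpi : 0 < π := Real.pi_pos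
  set r : ℝ := ‖u - u'‖ with hrdef
  set c : ℝ := ‖x‖ ^ 2 + ‖x'‖ ^ 2 with hcdef
  have hc2 : c = 2 * ‖x‖ ^ 2 := by rw [hcdef, hx, norm_neg]; ring
  have hc0 : 0 ≤ c := by positivity
  have hcr : π * c ≤ 4 * r := by rw [hc2]; nlinarith [hr]
  clear_value r c
  set S : Set ℝ := {t : ℝ | ∃ l : EuclideanSpace ℝ (Fin n'), ‖l‖ < π ∧
        t = c * (if ‖l‖ = 0 then 2 else ‖l‖ * (Real.cos (‖l‖ / 2) / Real.sin (‖l‖ / 2))) +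
          2 * ⟪u - u', l⟫_ℝ} with hSdef
  -- upper bound
  have hub : ∀ t ∈ S, t ≤ 2 * π * r := by
    rintro t ⟨l, hl, rfl⟩
    have hln : (0:ℝ) ≤ ‖l‖ := norm_nonneg l
    have hinner : ⟪u - u', l⟫_ℝ ≤ r * ‖l‖ := by
      rw [hrdef]; exact real_inner_le_norm _ _
    have h1 : c * (if ‖l‖ = 0 then (2:ℝ) else ‖l‖ * (Real.cos (‖l‖ / 2) / Real.sin (‖l‖ / 2)))
        ≤ c * (π * (π - ‖l‖) / 2) :=
      mul_le_mul_of_nonneg_left (psi_le hln hl) hc0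
    have h2 : c * (π * (π - ‖l‖) / 2) ≤ 2 * r * (π - ‖l‖) := by
      have hkey := mul_le_mul_of_nonneg_right hcr (show (0:ℝ) ≤ π - ‖l‖ by linarith)
      nlinarith [hkey, sq_nonneg (π - ‖l‖)]
    nlinarith
  have hne : S.Nonempty := by
    refine ⟨c * 2 + 2 * ⟪u - u', (0 : EuclideanSpace ℝ (Fin n'))⟫_ℝ, 0, ?_, ?_⟩
    · simpa using hpi
    · simp
  have hbdd : BddAbove S := ⟨2 * π * r, fun t ht => hub t ht⟩
  refine le_antisymm (csSup_le hne hub) ?_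
  -- lower bound
  rcases eq_or_lt_of_le (norm_nonneg (u - u')) with hr0 | hr0
  · -- r = 0, and then x = 0 so c = 0
    have hx0 : ‖x‖ ^ 2 = 0 := by nlinarith [sq_nonneg ‖x‖]
    have hc : c = 0 := by rw [hc2, hx0]; ring
    have h0 : (0:ℝ) ∈ S := by
      refine ⟨0, by simpa using hpi, ?_⟩
      simp [hc]
    have hre : r = 0 := hrdef.trans hr0.symm
    rw [hre]
    simpa using le_csSup hbdd h0
  · have hrpos : 0 < r := by rw [hrdef]; exact hr0
    have hrne : r ≠ 0 := ne_of_gt hrpos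
    apply le_of_forall_pos_le_add
    intro ε hε
    set δ : ℝ := min (π / 2) (ε / (2 * r)) with hδdef
    have hδ0 : 0 < δ := lt_min (by linarith) (div_pos hε (by linarith))
    have hδπ : δ ≤ π / 2 := min_le_left _ _
    have hδε : 2 * r * δ ≤ ε := by
      have := min_le_right (π / 2) (ε / (2 * r))
      calc 2 * r * δ ≤ 2 * r * (ε / (2 * r)) := by
            apply mul_le_mul_of_nonneg_left this (by linarith)
        _ = ε := by field_simp
    set s : ℝ := π - δ with hsdef
    have hs0 : 0 < s := by simp only [hsdef]; linarith
    have hsπ : s < π := by simp only [hsdef]; linarith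
    set l : EuclideanSpace ℝ (Fin n') := (s / r) • (u - u') with hldef
    have hnl : ‖l‖ = s := by
      rw [hldef, norm_smul, Real.norm_eq_abs, abs_of_pos (div_pos hs0 hrpos), ← hrdef]
      field_simp
    have hinner : ⟪u - u', l⟫_ℝ = s * r := by
      rw [hldef, real_inner_smul_right, real_inner_self_eq_norm_sq, ← hrdef]
      field_simp
    have hmem : c * (if ‖l‖ = 0 then (2:ℝ)
        else ‖l‖ * (Real.cos (‖l‖ / 2) / Real.sin (‖l‖ / 2))) + 2 * ⟪u - u', l⟫_ℝ ∈ S := by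
      exact ⟨l, by rw [hnl]; exact hsπ, rfl⟩
    have hψ : 0 ≤ c * (if ‖l‖ = 0 then (2:ℝ)
        else ‖l‖ * (Real.cos (‖l‖ / 2) / Real.sin (‖l‖ / 2))) :=
      mul_nonneg hc0 (psi_nonneg (norm_nonneg l) (hnl ▸ hsπ))
    have hle := le_csSup hbdd hmem
    have : 2 * π * r = 2 * s * r + 2 * r * δ := by rw [hsdef]; ring
    rw [this]
    have : 2 * s * r ≤ sSup S := by
      calc 2 * s * r ≤ c * (if ‖l‖ = 0 then (2:ℝ)
            else ‖l‖ * (Real.cos (‖l‖ / 2) / Real.sin (‖l‖ / 2))) + 2 * ⟪u - u', l⟫_ℝ := by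
            rw [hinner]; linarith
        _ ≤ sSup S := hle
    linarith
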